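/- arXiv:2303.08417 — 4 statements merged into one kernel-verified Lean document; each statement's English description precedes it below -/
import Mathlib

section
/- Let G be a connected graph on n vertices, let f be an eigenvector of the Laplacian L(G) with exactly one negative component, say at vertex v, all other components nonnegative, and suppose v is not a cut-vertex of G. Then the vertex set of G can be partitioned into exactly two sets V₁ = {v} and V₂ = V \ {v} such that both induced subgraphs are connected, V₁ carries only the negative value, and the vector g obtained from f by replacing zero components with 1 is positive on V₂ and negative on V₁; consequently the number of nodal decomposition D(f) equals 2. -/
open Matrix

/-- The graph whose edges are the edges of `G` on which the vector `g` does not change sign.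
Its connected components are the strong nodal domains of `g` (for `g` nowhere zero). -/
def signGraph {V : Type*} (G : SimpleGraph V) (g : V → ℝ) : SimpleGraph V :=
  SimpleGraph.fromRel (fun u w => G.Adj u w ∧ 0 < g u * g w)

/-- `g` is obtained from `f` by keeping the nonzero entries and replacing each zero entry
by `1` or `-1`. -/
def SignCompatible {V : Type*} (f g : V → ℝ) : Prop :=
  ∀ v, (f v ≠ 0 → g v = f v) ∧ (f v = 0 → g v = 1 ∨ g v = -1)

/-- The "number of nodal decomposition" `D(f)`: the minimum number of strong nodal domains of a
vector `g` obtained from `f` by replacing zero entries with `±1`. -/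
noncomputable def nodalDecompCount {V : Type*} (G : SimpleGraph V) (f : V → ℝ) : ℕ :=
  sInf {n | ∃ g : V → ℝ, SignCompatible f g ∧
    Nat.card (signGraph G g).ConnectedComponent = n}

/-- Adjacent vertices in the sign graph have a positive product of values. -/
lemma signGraph_adj_pos {V : Type*} {G : SimpleGraph V} {g : V → ℝ} {u w : V}
    (h : (signGraph G g).Adj u w) : 0 < g u * g w := by
  rw [signGraph, SimpleGraph.fromRel_adj] at h
  rcases h.2 with h' | h'
  · exact h'.2
  · rw [mul_comm]; exact h'.2

/-- Sign is constant along reachability in the sign graph. -/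
lemma signGraph_reachable_pos {V : Type*} {G : SimpleGraph V} {g : V → ℝ} {u w : V}
    (h : (signGraph G g).Reachable u w) (hu : 0 < g u) : 0 < g w := by
  obtain ⟨p⟩ := h
  induction p with
  | nil => exact hu
  | cons hadj p ih =>
    apply ih
    have := signGraph_adj_pos hadj
    rcases mul_pos_iff.mp this with ⟨_, h2⟩ | ⟨h1, _⟩
    · exact h2
    · exact absurd hu (not_lt.mpr h1.le)

/-- Let `G` be a connected graph, `f` an eigenvector of the Laplacian with exactly one negative
component, at a vertex `v` which is not a cut-vertex. Then `V` is partitioned into `{v}` and its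
complement, both inducing connected subgraphs, the vector `g` (obtained from `f` by replacing
zeros with `1`) is negative on `{v}` and positive elsewhere, and `D(f) = 2`. -/
theorem nodal_decomp_of_one_negative_component {V : Type*} [Fintype V] [DecidableEq V]
    (G : SimpleGraph V) [DecidableRel G.Adj] (hG : G.Connected) (hcard : 2 ≤ Fintype.card V)
    (μ : ℝ) (f : V → ℝ) (hf : f ≠ 0) (heig : G.lapMatrix ℝ *ᵥ f = μ • f)
    (v : V) (hneg : f v < 0) (hnonneg : ∀ u, u ≠ v → 0 ≤ f u)
    (hnotcut : (G.induce {u : V | u ≠ v}).Connected) :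
    (G.induce ({v} : Set V)).Connected ∧ (G.induce {u : V | u ≠ v}).Connected ∧
      (∀ u : V, (if f u = 0 then (1 : ℝ) else f u) < 0 ↔ u = v) ∧
      nodalDecompCount G f = 2 := by
  set g : V → ℝ := fun u => if f u = 0 then (1 : ℝ) else f u with hg
  have hgv : g v = f v := by simp [hg, hneg.ne]
  have hgpos : ∀ u, u ≠ v → 0 < g u := by
    intro u hu
    by_cases h0 : f u = 0
    · simp [hg, h0]
    · simp only [hg, h0, if_false]
      exact lt_of_le_of_ne (hnonneg u hu) (Ne.symm h0)
  -- there exists a vertex with strictly positive value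
  have hexpos : ∃ u, 0 < f u := by
    by_contra h
    push_neg at h
    have hzero : ∀ u, u ≠ v → f u = 0 := fun u hu => le_antisymm (h u) (hnonneg u hu)
    obtain ⟨u, hu⟩ := Fintype.exists_ne_of_one_lt_card (by omega) v
    obtain ⟨p⟩ := hG.preconnected v u
    obtain ⟨w, hw⟩ : ∃ w, G.Adj v w := by
      cases p with
      | nil => exact absurd rfl hu
      | cons hadj _ => exact ⟨_, hadj⟩
    have hwv : w ≠ v := hw.ne'
    have he := congrFun heig w
    rw [SimpleGraph.lapMatrix_mulVec_apply] at he
    have hsum : ∑ u ∈ G.neighborFinset w, f u = f v := by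
      rw [Finset.sum_eq_single v]
      · intro b hb hbv
        exact hzero b hbv
      · intro hv
        exact absurd ((G.mem_neighborFinset w v).mpr hw.symm) hv
    rw [hsum, hzero w hwv] at he
    simp only [Pi.smul_apply, smul_eq_mul, hzero w hwv, mul_zero] at he
    linarith
  obtain ⟨upos, hupos⟩ := hexpos
  have huposv : upos ≠ v := fun h => absurd (h ▸ hupos) (not_lt.mpr hneg.le)
  -- sign-compatible vectors are negative at v
  have hcompat_neg : ∀ g' : V → ℝ, SignCompatible f g' → g' v < 0 := by
    intro g' hc
    rw [(hc v).1 hneg.ne]; exact hneg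
  have hcompat_pos : ∀ g' : V → ℝ, SignCompatible f g' → 0 < g' upos := by
    intro g' hc
    rw [(hc upos).1 hupos.ne']; exact hupos
  -- lower bound: every sign-compatible g' has at least 2 components
  have hlower : ∀ n ∈ {n | ∃ g' : V → ℝ, SignCompatible f g' ∧
      Nat.card (signGraph G g').ConnectedComponent = n}, 2 ≤ n := by
    rintro n ⟨g', hc, rfl⟩
    have hne : (signGraph G g').connectedComponentMk upos ≠ (signGraph G g').connectedComponentMk v := by
      intro h
      have hr : (signGraph G g').Reachable upos v := (SimpleGraph.ConnectedComponent.eq).mp h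
      have := signGraph_reachable_pos hr (hcompat_pos g' hc)
      exact absurd this (not_lt.mpr (hcompat_neg g' hc).le)
    have : Nontrivial (signGraph G g').ConnectedComponent := ⟨_, _, hne⟩
    have := (@Finite.one_lt_card_iff_nontrivial _ _).mpr this
    omega
  -- the canonical g gives exactly 2 components
  have hcg : SignCompatible f g := by
    intro u
    constructor
    · intro h0; simp [hg, h0]
    · intro h0; left; simp [hg, h0]
  -- reachability in signGraph between any two vertices ≠ v
  have hhom : ∀ a b : {u : V | u ≠ v}, (G.induce {u : V | u ≠ v}).Adj a b →
      (signGraph G g).Adj a.val b.val := by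
    rintro ⟨a, ha⟩ ⟨b, hb⟩ hab
    have hadj : G.Adj a b := hab
    rw [signGraph, SimpleGraph.fromRel_adj]
    exact ⟨hadj.ne, Or.inl ⟨hadj, mul_pos (hgpos a ha) (hgpos b hb)⟩⟩
  have hreach : ∀ a b : V, a ≠ v → b ≠ v → (signGraph G g).Reachable a b := by
    intro a b ha hb
    have := hnotcut.preconnected ⟨a, ha⟩ ⟨b, hb⟩
    exact this.map ⟨Subtype.val, fun h => hhom _ _ h⟩
  -- v is isolated in signGraph
  have hviso : ∀ b : V, ¬ (signGraph G g).Adj v b := by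
    intro b hadj
    have hpos := signGraph_adj_pos hadj
    have hbv : b ≠ v := fun h => (signGraph G g).irrefl (h ▸ hadj)
    have : g v * g b < 0 := mul_neg_of_neg_of_pos (hgv ▸ hneg) (hgpos b hbv)
    linarith
  have hcard2 : Nat.card (signGraph G g).ConnectedComponent = 2 := by
    rw [Nat.card_eq_two_iff]
    refine ⟨(signGraph G g).connectedComponentMk v, (signGraph G g).connectedComponentMk upos, ?_, ?_⟩
    · intro h
      have hr : (signGraph G g).Reachable upos v := (SimpleGraph.ConnectedComponent.eq).mp h.symm
      have := signGraph_reachable_pos hr (hgpos upos huposv)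
      rw [hgv] at this; linarith
    · ext c
      simp only [Set.mem_insert_iff, Set.mem_singleton_iff, Set.mem_univ, iff_true]
      induction c using SimpleGraph.ConnectedComponent.ind with
      | _ w =>
        by_cases hwv : w = v
        · left; rw [hwv]
        · right
          exact (SimpleGraph.ConnectedComponent.eq).mpr (hreach upos w huposv hwv).symm
  refine ⟨?_, hnotcut, ?_, ?_⟩
  · rw [SimpleGraph.connected_iff]
    refine ⟨fun a b => ?_, ⟨⟨v, rfl⟩⟩⟩
    obtain ⟨a, ha⟩ := a
    obtain ⟨b, hb⟩ := b
    simp only [Set.mem_singleton_iff] at ha hb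
    subst ha; subst hb
    exact SimpleGraph.Reachable.refl _
  · intro u
    constructor
    · intro h
      by_contra huv
      exact absurd h (not_lt.mpr (hgpos u huv).le)
    · rintro rfl
      simp only [hneg.ne, if_false]
      exact hneg
  · apply le_antisymm
    · exact Nat.sInf_le ⟨g, hcg, hcard2⟩
    · exact le_csInf ⟨2, g, hcg, hcard2⟩ hlower
end

section
/- Let G be the join K₁ + G' of a single vertex with a graph G' on n-1 vertices, where G' is disconnected. Then n is a simple eigenvalue of the Laplacian L(G). -/
open Matrix

/-- The join `G + H` of two disjoint graphs: all edges of `G` and `H`, together with all edges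
between the two vertex sets. -/
def graphJoin {α β : Type*} (G : SimpleGraph α) (H : SimpleGraph β) : SimpleGraph (α ⊕ β) where
  Adj u v := match u, v with
    | Sum.inl u, Sum.inl v => G.Adj u v
    | Sum.inr u, Sum.inr v => H.Adj u v
    | Sum.inl _, Sum.inr _ => True
    | Sum.inr _, Sum.inl _ => True
  symm := ⟨fun u v => match u, v with
    | Sum.inl _, Sum.inl _ => G.adj_symm
    | Sum.inr _, Sum.inr _ => H.adj_symm
    | Sum.inl _, Sum.inr _ => fun _ => trivial
    | Sum.inr _, Sum.inl _ => fun _ => trivial⟩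
  loopless := ⟨fun u => match u with
    | Sum.inl u => G.loopless.irrefl u
    | Sum.inr u => H.loopless.irrefl u⟩

instance {α β : Type*} (G : SimpleGraph α) (H : SimpleGraph β)
    [DecidableRel G.Adj] [DecidableRel H.Adj] : DecidableRel (graphJoin G H).Adj :=
  fun u v => match u, v with
    | Sum.inl u, Sum.inl v => inferInstanceAs (Decidable (G.Adj u v))
    | Sum.inr u, Sum.inr v => inferInstanceAs (Decidable (H.Adj u v))
    | Sum.inl _, Sum.inr _ => inferInstanceAs (Decidable True)
    | Sum.inr _, Sum.inl _ => inferInstanceAs (Decidable True)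

/-! Since `L(G) + L(Gᶜ) = n • 1 - J` with `J` the all-ones matrix, and the entries of `L(G) x` sum
to zero, the vectors with `L(G) x = n • x` are exactly those with zero sum in the kernel of
`L(Gᶜ)`, i.e. constant on the connected components of `Gᶜ`. For `G = K₁ + G'` the complement is an
isolated vertex beside `G'ᶜ`, which is connected because `G'` is not; so the eigenspace of `n` is
spanned by `(n - 1, -1, …, -1)`. -/

namespace SimpleGraph

section Laplacian

variable {V R : Type*} [Fintype V] [DecidableEq V] (G : SimpleGraph V) [DecidableRel G.Adj]

theorem lapMatrix_mulVec_apply_eq_sum [CommRing R] (x : V → R) (i : V) :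
    (G.lapMatrix R *ᵥ x) i = ∑ j, if G.Adj i j then x i - x j else 0 := by
  rw [lapMatrix_mulVec_apply, degree_eq_sum_if_adj, Finset.sum_mul, neighborFinset_eq_filter,
    Finset.sum_filter, ← Finset.sum_sub_distrib]
  refine Finset.sum_congr rfl fun j _ => ?_
  split_ifs <;> ring

theorem lapMatrix_mulVec_add_lapMatrix_compl_mulVec [CommRing R] (x : V → R) (i : V) :
    (G.lapMatrix R *ᵥ x) i + (Gᶜ.lapMatrix R *ᵥ x) i = Fintype.card V * x i - ∑ j, x j := by
  have hterm : ∀ j, ((if G.Adj i j then x i - x j else 0) +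
      if Gᶜ.Adj i j then x i - x j else 0) = x i - x j := by
    intro j
    by_cases hij : i = j
    · subst hij; simp
    · by_cases hadj : G.Adj i j <;> simp [compl_adj, hij, hadj]
  simp only [lapMatrix_mulVec_apply_eq_sum, ← Finset.sum_add_distrib, hterm,
    Finset.sum_sub_distrib, Finset.sum_const, Finset.card_univ, nsmul_eq_mul]

theorem sum_lapMatrix_mulVec [CommRing R] (x : V → R) : ∑ i, (G.lapMatrix R *ᵥ x) i = 0 := by
  calc ∑ i, (G.lapMatrix R *ᵥ x) i = (fun _ => 1) ⬝ᵥ (G.lapMatrix R *ᵥ x) := by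
        simp [dotProduct]
    _ = (G.lapMatrix R *ᵥ fun _ => 1) ⬝ᵥ x := by
        rw [dotProduct_mulVec, ← mulVec_transpose, (G.isSymm_lapMatrix (R := R)).eq]
    _ = 0 := by rw [lapMatrix_mulVec_const_eq_zero, zero_dotProduct]

theorem lapMatrix_mulVec_eq_card_smul_iff [Field R] [CharZero R] {x : V → R} :
    G.lapMatrix R *ᵥ x = (Fintype.card V : R) • x ↔
      ∑ i, x i = 0 ∧ Gᶜ.lapMatrix R *ᵥ x = 0 := by
  have hsplit := G.lapMatrix_mulVec_add_lapMatrix_compl_mulVec x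
  constructor
  · intro h
    have hsum : ∑ i, x i = 0 := by
      have hn : (Fintype.card V : R) * ∑ i, x i = 0 := by
        simpa [h, Finset.mul_sum] using G.sum_lapMatrix_mulVec x
      rcases mul_eq_zero.mp hn with hV | hx
      · simp [Fintype.card_eq_zero_iff.mp (by exact_mod_cast hV)]
      · exact hx
    exact ⟨hsum, funext fun i => by simpa [h, hsum] using hsplit i⟩
  · rintro ⟨hsum, hcompl⟩
    funext i
    simpa [hcompl, hsum] using hsplit i

end Laplacian

section Join

variable {V W : Type*} (G : SimpleGraph V) (H : SimpleGraph W)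

theorem compl_graphJoin : (graphJoin G H)ᶜ = Gᶜ ⊕g Hᶜ := by
  ext (v | w) (v' | w') <;> simp [graphJoin, compl_adj]

variable {G H}

theorem forall_reachable_sum_iff {α : Type*} (hG : G.Preconnected) (hH : H.Preconnected)
    {x : V ⊕ W → α} :
    (∀ i j, (G ⊕g H).Reachable i j → x i = x j) ↔
      (∀ v v', x (.inl v) = x (.inl v')) ∧ ∀ w w', x (.inr w) = x (.inr w') := by
  refine ⟨fun h => ⟨fun v v' => h _ _ ((hG v v').map Embedding.sumInl.toHom),
    fun w w' => h _ _ ((hH w w').map Embedding.sumInr.toHom)⟩, ?_⟩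
  rintro ⟨hl, hr⟩ (v | w) (v' | w') hreach
  · exact hl v v'
  · exact absurd hreach (not_reachable_sum_inl_inr v w')
  · exact absurd hreach.symm (not_reachable_sum_inl_inr v' w)
  · exact hr w w'

end Join

end SimpleGraph

/-- Let `G = K₁ + G'` be the join of a single vertex with a disconnected graph `G'` on `n - 1`
vertices. Then `n` (the total number of vertices) is a simple eigenvalue of the Laplacian
`L(G)`. -/
theorem join_K1_disconnected_top_eigenvalue_simple {V' : Type*} [Fintype V'] [DecidableEq V']
    [Nonempty V'] (G' : SimpleGraph V') [DecidableRel G'.Adj] (hdis : ¬G'.Connected) :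
    ∃ f : Unit ⊕ V' → ℝ, f ≠ 0 ∧
      (graphJoin (⊥ : SimpleGraph Unit) G').lapMatrix ℝ *ᵥ f =
        (Fintype.card (Unit ⊕ V') : ℝ) • f ∧
      ∀ g : Unit ⊕ V' → ℝ,
        (graphJoin (⊥ : SimpleGraph Unit) G').lapMatrix ℝ *ᵥ g =
          (Fintype.card (Unit ⊕ V') : ℝ) • g → ∃ c : ℝ, g = c • f := by
  have hcompl : G'ᶜ.Preconnected := G'.connected_or_preconnected_compl.resolve_left hdis
  have key : ∀ x : Unit ⊕ V' → ℝ,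
      (graphJoin (⊥ : SimpleGraph Unit) G').lapMatrix ℝ *ᵥ x =
          (Fintype.card (Unit ⊕ V') : ℝ) • x ↔
        ∑ i, x i = 0 ∧ ∀ w w', x (.inr w) = x (.inr w') := fun x => by
    rw [SimpleGraph.lapMatrix_mulVec_eq_card_smul_iff,
      SimpleGraph.lapMatrix_mulVec_eq_zero_iff_forall_reachable, SimpleGraph.compl_graphJoin,
      SimpleGraph.forall_reachable_sum_iff (by simp) hcompl]
    simp
  refine ⟨Sum.elim (fun _ => (Fintype.card V' : ℝ)) (fun _ => -1), fun h => ?_,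
    (key _).mpr ⟨by simp [Fintype.sum_sum_type], fun _ _ => rfl⟩, fun g hg => ?_⟩
  · simpa using congrFun h (.inr (Classical.arbitrary V'))
  obtain ⟨hsum, hconst⟩ := (key g).mp hg
  obtain ⟨w₀⟩ := ‹Nonempty V'›
  refine ⟨-g (.inr w₀), funext fun i => ?_⟩
  rcases i with u | w
  · have hu : g (.inl u) + Fintype.card V' * g (.inr w₀) = 0 := by
      simpa [Fintype.sum_sum_type, hconst _ w₀] using hsum
    simp only [Pi.smul_apply, Sum.elim_inl, smul_eq_mul]
    linarith
  · simp [hconst w w₀]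
end

section
/- Let G be a complete multipartite graph and let 𝒢 be the G-join replacing each vertex y of G by a complete graph K_{p_y}. Consider the partition of 𝒢 into s parts corresponding to the independent parts of G, with N total vertices and the r-th part covering N_r vertices. For each part r with n_r ≥ 2 blocks, the vector equal to 1 on one block K_{p_l} of part r, equal to -p_l/p_m on another block K_{p_m} of part r, and 0 elsewhere is an eigenvector of the Laplacian L(𝒢) with eigenvalue N - N_r. -/
open Matrix
open scoped Classical

/-- The `G`-join over a complete multipartite base graph, with complete graphs as blocks:
vertices carry a `part` (the independent part of the complete multipartite base graph) and a
`block` (the vertex of the base graph, i.e. the complete graph replacing it); two distinct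
vertices are adjacent iff they lie in different parts, or in the same block. -/
def multipartiteJoin {V : Type*} {s : ℕ} {β : Type*}
    (part : V → Fin s) (block : V → β) : SimpleGraph V :=
  SimpleGraph.fromRel (fun u w => part u ≠ part w ∨ block u = block w)

/-! A vector that is constant on blocks, vanishes outside part `r` and has total sum zero is an
eigenvector for `N - N_r`. At a vertex outside part `r`, all of part `r` is adjacent, so the
Laplacian returns minus the total sum, i.e. `0`. At a vertex of part `r`, the only neighbours
inside part `r` lie in its own block, where the vector takes the same value, and the `N - N_r`
neighbours outside part `r` carry the value `0`. The vector of the theorem has sum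
`pₗ · 1 + pₘ · (-pₗ/pₘ) = 0`. -/

theorem SimpleGraph.lapMatrix_mulVec_apply_eq_sum_adj {V R : Type*} [Fintype V] [DecidableEq V]
    [NonAssocRing R] (G : SimpleGraph V) [DecidableRel G.Adj] (x : V → R) (u : V) :
    (G.lapMatrix R *ᵥ x) u = ∑ w, if G.Adj u w then x u - x w else 0 := by
  rw [lapMatrix_mulVec_apply, ← card_neighborFinset_eq_degree, ← nsmul_eq_mul, ← Finset.sum_const,
    ← Finset.sum_sub_distrib, neighborFinset_eq_filter, Finset.sum_filter]

theorem Fintype.sum_ite_zero_const {V R : Type*} [Fintype V] [NonAssocRing R] (p : V → Prop)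
    [DecidablePred p] (c : R) :
    ∑ w, (if p w then 0 else c) = ((Fintype.card V : R) - Fintype.card {w // p w}) * c := by
  rw [← Nat.cast_sub (Fintype.card_subtype_le p), ← Fintype.card_subtype_compl,
    Fintype.card_subtype, Finset.sum_ite, Finset.sum_const_zero, zero_add, Finset.sum_const,
    nsmul_eq_mul]

theorem sum_ite_block_eq_ite_block_eq {V β : Type*} [Fintype V] [DecidableEq β] {block : V → β}
    {l m : β} (hlm : l ≠ m) (a b : ℝ) :
    ∑ u, (if block u = l then a else if block u = m then b else 0) =
      Fintype.card {u // block u = l} * a + Fintype.card {u // block u = m} * b := by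
  calc ∑ u, (if block u = l then a else if block u = m then b else 0)
      = ∑ u, ((if block u = l then a else 0) + if block u = m then b else 0) := by
        refine Finset.sum_congr rfl fun u _ => ?_
        by_cases h : block u = l
        · simp [h, hlm]
        · simp [h]
    _ = _ := by simp [Finset.sum_add_distrib, Finset.sum_ite, Fintype.card_subtype]

section

variable {V β : Type*} {s : ℕ} {part : V → Fin s} {block : V → β}

theorem multipartiteJoin_adj {u w : V} :
    (multipartiteJoin part block).Adj u w ↔ u ≠ w ∧ (part u ≠ part w ∨ block u = block w) := by
  rw [multipartiteJoin, SimpleGraph.fromRel_adj, ne_comm (a := part w), eq_comm (a := block w),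
    or_self]

theorem multipartiteJoin_lapMatrix_mulVec_of_sum_eq_zero [Fintype V] [DecidableEq V] (r : Fin s)
    (f : β → ℝ) (hsupp : ∀ u, part u ≠ r → f (block u) = 0) (hsum : ∑ u, f (block u) = 0) :
    (multipartiteJoin part block).lapMatrix ℝ *ᵥ (fun u => f (block u)) =
      ((Fintype.card V : ℝ) - Fintype.card {u // part u = r}) • fun u => f (block u) := by
  ext u
  rw [SimpleGraph.lapMatrix_mulVec_apply_eq_sum_adj, Pi.smul_apply, smul_eq_mul]
  by_cases hu : part u = r
  · have hterm : ∀ w, (if (multipartiteJoin part block).Adj u w then f (block u) - f (block w)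
        else 0) = if part w = r then 0 else f (block u) := by
      intro w
      by_cases hw : part w = r
      · simp only [hw, if_true, multipartiteJoin_adj, hu, ne_eq, not_true, false_or]
        split_ifs with h
        · rw [h.2]; ring
        · rfl
      · rw [if_pos, if_neg hw, hsupp w hw, sub_zero]
        exact multipartiteJoin_adj.2 ⟨by rintro rfl; exact hw hu, Or.inl (hu ▸ Ne.symm hw)⟩
    rw [Finset.sum_congr rfl fun w _ => hterm w, Fintype.sum_ite_zero_const]
  · have hterm : ∀ w, (if (multipartiteJoin part block).Adj u w then f (block u) - f (block w)
        else 0) = -f (block w) := by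
      intro w
      by_cases hw : part w = r
      · rw [if_pos, hsupp u hu, zero_sub]
        exact multipartiteJoin_adj.2 ⟨by rintro rfl; exact hu hw, Or.inl (hw ▸ hu)⟩
      · split_ifs <;> simp [hsupp u hu, hsupp w hw]
    rw [Finset.sum_congr rfl fun w _ => hterm w, Finset.sum_neg_distrib, hsum, hsupp u hu]
    ring

end

theorem multipartiteJoin_part_eigenvector_general {V : Type*} [Fintype V] [DecidableEq V]
    {s : ℕ} {β : Type*} [DecidableEq β] (part : V → Fin s) (block : V → β)
    (r : Fin s) (l m : β) (hlm : l ≠ m)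
    (hl : ∀ u : V, block u = l → part u = r) (hm : ∀ u : V, block u = m → part u = r)
    (hmne : ∃ u : V, block u = m) :
    (multipartiteJoin part block).lapMatrix ℝ *ᵥ
        (fun u => if block u = l then (1 : ℝ)
          else if block u = m then
            -(Fintype.card {u : V // block u = l} : ℝ) / (Fintype.card {u : V // block u = m} : ℝ)
          else 0) =
      ((Fintype.card V : ℝ) - (Fintype.card {u : V // part u = r} : ℝ)) •
        (fun u => if block u = l then (1 : ℝ)
          else if block u = m then
            -(Fintype.card {u : V // block u = l} : ℝ) / (Fintype.card {u : V // block u = m} : ℝ)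
          else 0) := by
  set pl : ℝ := (Fintype.card {u : V // block u = l} : ℝ)
  set pm : ℝ := (Fintype.card {u : V // block u = m} : ℝ)
  have hpm : pm ≠ 0 := by
    obtain ⟨u, hu⟩ := hmne
    have : Nonempty {u // block u = m} := ⟨⟨u, hu⟩⟩
    exact Nat.cast_ne_zero.2 Fintype.card_ne_zero
  refine multipartiteJoin_lapMatrix_mulVec_of_sum_eq_zero r
    (fun b => if b = l then 1 else if b = m then -pl / pm else 0) (fun u hu => ?_) ?_
  · have hul : block u ≠ l := fun h => hu (hl u h)
    have hum : block u ≠ m := fun h => hu (hm u h)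
    simp only [hul, hum, if_false]
  · rw [sum_ite_block_eq_ite_block_eq hlm]
    field_simp
    ring

/-- In the `G`-join `𝒢` of complete graphs over a complete multipartite graph `G`: for a part
`r` containing (at least) two distinct blocks `l`, `m`, the vector equal to `1` on block `l`,
to `-pₗ/pₘ` on block `m` and `0` elsewhere is an eigenvector of the Laplacian `L(𝒢)` with
eigenvalue `N - N_r`, where `pₗ`, `pₘ` are the block sizes, `N_r` the size of part `r`, and `N`
the total number of vertices. -/
theorem multipartiteJoin_part_eigenvector {V : Type*} [Fintype V] [DecidableEq V]
    {s : ℕ} {β : Type*} [DecidableEq β] (part : V → Fin s) (block : V → β)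
    (hblock : ∀ u w : V, block u = block w → part u = part w)
    (r : Fin s) (l m : β) (hlm : l ≠ m)
    (hl : ∀ u : V, block u = l → part u = r) (hm : ∀ u : V, block u = m → part u = r)
    (hlne : ∃ u : V, block u = l) (hmne : ∃ u : V, block u = m) :
    (multipartiteJoin part block).lapMatrix ℝ *ᵥ
        (fun u => if block u = l then (1 : ℝ)
          else if block u = m then
            -(Fintype.card {u : V // block u = l} : ℝ) / (Fintype.card {u : V // block u = m} : ℝ)
          else 0) =
      ((Fintype.card V : ℝ) - (Fintype.card {u : V // part u = r} : ℝ)) •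
        (fun u => if block u = l then (1 : ℝ)
          else if block u = m then
            -(Fintype.card {u : V // block u = l} : ℝ) / (Fintype.card {u : V // block u = m} : ℝ)
          else 0) :=
  multipartiteJoin_part_eigenvector_general part block r l m hlm hl hm hmne
end

section
/- Let H be a cyclic group of order pq where p < q are distinct primes. Then the power graph 𝒫(H) is isomorphic to the join (K_{p-1} ∪ K_{q-1}) + K_{φ(pq)+1}, where φ is Euler's totient function. -/
open Matrix

/-- The power graph of a group: distinct `x`, `y` are adjacent iff one is a positive power of
the other (equivalently, a natural power of the other, in a finite group). -/
def powerGraph (H : Type*) [Monoid H] : SimpleGraph H :=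
  SimpleGraph.fromRel (fun x y => ∃ n : ℕ, x = y ^ n)

/-!
In a finite cyclic group an element is a power of another exactly when its order divides the
other's order, so two distinct elements are adjacent in the power graph iff their orders are
comparable under divisibility. When the group has order `p * q` the possible orders are
`1, p, q, p * q`, and only `p` and `q` are incomparable: the elements of order `p` and those of
order `q` form two cliques with no edges between them, and every element of order `1` or `p * q`
is adjacent to all others. Counting elements of each order with the totient gives the sizes
`p - 1`, `q - 1` and `φ 1 + φ (p * q)`.
-/

open SimpleGraph Subgroup

theorem Nat.eq_one_or_self_or_self_or_mul_of_dvd_mul {p q d : ℕ} (hp : p.Prime) (hq : q.Prime)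
    (hd : d ∣ p * q) : d = 1 ∨ d = p ∨ d = q ∨ d = p * q := by
  obtain ⟨a, b, ha, hb, rfl⟩ := Nat.dvd_mul.mp hd
  rcases hp.eq_one_or_self_of_dvd a ha with rfl | rfl <;>
    rcases hq.eq_one_or_self_of_dvd b hb with rfl | rfl <;> simp

theorem Nat.dvd_or_dvd_iff_of_dvd_mul {p q a b : ℕ} (hp : p.Prime) (hq : q.Prime) (hpq : p ≠ q)
    (ha : a ∣ p * q) (hb : b ∣ p * q) :
    a ∣ b ∨ b ∣ a ↔ ¬(a = p ∧ b = q) ∧ ¬(a = q ∧ b = p) := by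
  rcases Nat.eq_one_or_self_or_self_or_mul_of_dvd_mul hp hq ha with rfl | rfl | rfl | rfl <;>
    rcases Nat.eq_one_or_self_or_self_or_mul_of_dvd_mul hp hq hb with rfl | rfl | rfl | rfl <;>
    simp [hpq, hpq.symm, hp.ne_zero, hq.ne_zero, hp.ne_one, hq.ne_one, hp.one_lt.ne, hq.one_lt.ne,
      Nat.prime_dvd_prime_iff_eq hp hq, Nat.prime_dvd_prime_iff_eq hq hp]

section Cyclic

variable {G : Type*} [Group G] [Fintype G] [IsCyclic G]

theorem IsCyclic.mem_zpowers_of_orderOf_dvd {x y : G} (h : orderOf x ∣ orderOf y) :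
    x ∈ zpowers y := by
  classical
  have hsub : (zpowers y : Set G).toFinset ⊆ ({a | a ^ orderOf y = 1} : Finset G) := fun z hz => by
    simpa using orderOf_dvd_iff_pow_eq_one.mp (orderOf_dvd_of_mem_zpowers (Set.mem_toFinset.mp hz))
  -- `zpowers y` already has `orderOf y` elements, the most a cyclic group allows to satisfy
  -- `a ^ orderOf y = 1`, so these solutions are exactly the powers of `y`.
  have heq := Finset.eq_of_subset_of_card_le hsub <| by
    rw [Set.toFinset_card, ← Nat.card_eq_fintype_card, SetLike.coe_sort_coe, Nat.card_zpowers]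
    exact IsCyclic.card_pow_eq_one_le (orderOf_pos y)
  have hx : x ∈ ({a | a ^ orderOf y = 1} : Finset G) := by
    simpa using orderOf_dvd_iff_pow_eq_one.mp h
  rwa [← heq, Set.mem_toFinset] at hx

theorem powerGraph_adj_iff {x y : G} :
    (powerGraph G).Adj x y ↔ x ≠ y ∧ (orderOf x ∣ orderOf y ∨ orderOf y ∣ orderOf x) := by
  have pow_of_dvd {a b : G} (h : orderOf a ∣ orderOf b) : ∃ n : ℕ, a = b ^ n := by
    obtain ⟨n, hn⟩ := mem_powers_iff_mem_zpowers.mpr (IsCyclic.mem_zpowers_of_orderOf_dvd h)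
    exact ⟨n, hn.symm⟩
  refine ⟨?_, fun ⟨hne, h⟩ => ⟨hne, h.imp pow_of_dvd pow_of_dvd⟩⟩
  rintro ⟨hne, ⟨n, rfl⟩ | ⟨n, rfl⟩⟩
  · exact ⟨hne, .inl (orderOf_pow_dvd n)⟩
  · exact ⟨hne, .inr (orderOf_pow_dvd n)⟩

theorem IsCyclic.card_orderOf_eq_prime {p : ℕ} (hp : p.Prime) (hdvd : p ∣ Fintype.card G) :
    Fintype.card {x : G // orderOf x = p} = p - 1 := by
  classical
  rw [Fintype.card_subtype, IsCyclic.card_orderOf_eq_totient hdvd, Nat.totient_prime hp]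

theorem IsCyclic.card_orderOf_ne_primes {p q : ℕ} (hp : p.Prime) (hq : q.Prime) (hpq : p ≠ q)
    (hcard : Fintype.card G = p * q) :
    Fintype.card {x : G // ¬(orderOf x = p ∨ orderOf x = q)} = (p * q).totient + 1 := by
  classical
  have horder (x : G) : ¬(orderOf x = p ∨ orderOf x = q) ↔ orderOf x = 1 ∨ orderOf x = p * q := by
    rcases Nat.eq_one_or_self_or_self_or_mul_of_dvd_mul hp hq (hcard ▸ orderOf_dvd_card (x := x))
      with h | h | h | h <;>
      simp [h, hpq, hpq.symm, hp.ne_zero, hq.ne_zero, hp.ne_one, hq.ne_one, hp.one_lt.ne,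
        hq.one_lt.ne]
  have hdisj : Disjoint (fun x : G => orderOf x = 1) (fun x => orderOf x = p * q) :=
    Pi.disjoint_iff.mpr fun x => Prop.disjoint_iff.mpr fun h =>
      (Nat.one_lt_mul_iff.mpr ⟨hp.pos, hq.pos, .inl hp.one_lt⟩).ne (h.1.symm.trans h.2)
  rw [Fintype.card_congr (Equiv.subtypeEquivRight horder),
    Fintype.card_subtype_or_disjoint _ _ hdisj, Fintype.card_subtype, Fintype.card_subtype,
    IsCyclic.card_orderOf_eq_totient (one_dvd _), IsCyclic.card_orderOf_eq_totient hcard.symm.dvd,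
    Nat.totient_one, add_comm]

end Cyclic

namespace SimpleGraph

variable {V W V' W' : Type*} {G : SimpleGraph V} {H : SimpleGraph W} {G' : SimpleGraph V'}
  {H' : SimpleGraph W'}

def Iso.graphJoin (f : G ≃g G') (g : H ≃g H') :
    _root_.graphJoin G H ≃g _root_.graphJoin G' H' :=
  ⟨Equiv.sumCongr f g, by
    rintro (u | u) (v | v) <;> simp [_root_.graphJoin, f.map_adj_iff, g.map_adj_iff]⟩

theorem nonempty_iso_graphJoin_of_adj_iff (P Q : V → Prop) (hPQ : Disjoint P Q)
    (hadj : ∀ x y, G.Adj x y ↔ x ≠ y ∧ ¬(P x ∧ Q y) ∧ ¬(Q x ∧ P y)) :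
    Nonempty (G ≃g _root_.graphJoin ((⊤ : SimpleGraph {x // P x}) ⊕g (⊤ : SimpleGraph {x // Q x}))
      (⊤ : SimpleGraph {x // ¬(P x ∨ Q x)})) := by
  classical
  have hdisj (x : V) (hP : P x) : ¬Q x := fun hQ => by
    simpa using Pi.disjoint_iff.mp hPQ x |>.le_bot ⟨hP, hQ⟩
  let e := (Equiv.sumCongr (subtypeOrEquiv P Q hPQ).symm (Equiv.refl _)).trans
    (Equiv.sumCompl fun x => P x ∨ Q x)
  refine ⟨Iso.symm ⟨e, ?_⟩⟩
  rintro ((⟨u, hu⟩ | ⟨u, hu⟩) | ⟨u, hu⟩) ((⟨v, hv⟩ | ⟨v, hv⟩) | ⟨v, hv⟩) <;>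
    simp [e, hadj, _root_.graphJoin, subtypeOrEquiv, hu, hv, hdisj] <;> grind

end SimpleGraph

/-- For a cyclic group `H` of order `pq` (`p < q` distinct primes), the power graph `𝒫(H)` is
isomorphic to `(K_{p-1} ∪ K_{q-1}) + K_{φ(pq)+1}`. -/
theorem powerGraph_cyclic_pq {H : Type*} [Group H] [Fintype H] (hH : IsCyclic H)
    (p q : ℕ) (hp : p.Prime) (hq : q.Prime) (hpq : p < q)
    (hcard : Fintype.card H = p * q) :
    Nonempty (powerGraph H ≃g
      graphJoin ((⊤ : SimpleGraph (Fin (p - 1))) ⊕g (⊤ : SimpleGraph (Fin (q - 1))))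
        (⊤ : SimpleGraph (Fin ((p * q).totient + 1)))) := by
  have hne : p ≠ q := hpq.ne
  have horder (x : H) : orderOf x ∣ p * q := hcard ▸ orderOf_dvd_card
  have hdisj : Disjoint (fun x : H => orderOf x = p) (fun x => orderOf x = q) :=
    Pi.disjoint_iff.mpr fun x => Prop.disjoint_iff.mpr fun h => hne (h.1.symm.trans h.2)
  obtain ⟨e⟩ := nonempty_iso_graphJoin_of_adj_iff _ _ hdisj fun x y => by
    rw [powerGraph_adj_iff, Nat.dvd_or_dvd_iff_of_dvd_mul hp hq hne (horder x) (horder y)]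
  have cardP := IsCyclic.card_orderOf_eq_prime hp (hcard ▸ dvd_mul_right p q)
  have cardQ := IsCyclic.card_orderOf_eq_prime hq (hcard ▸ dvd_mul_left q p)
  have cardC := IsCyclic.card_orderOf_ne_primes hp hq hne hcard
  exact ⟨e.trans <| Iso.graphJoin
    (Iso.sumCongr (Iso.completeGraph (Fintype.equivFinOfCardEq cardP))
      (Iso.completeGraph (Fintype.equivFinOfCardEq cardQ)))
    (Iso.completeGraph (Fintype.equivFinOfCardEq cardC))⟩
end
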